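/- Define ũ ∈ ℝ^{n+m} by: ũ_i = 1 if i ≤ n and B_{fi} ≠ 0; ũ_{n+j} = w_{j,max} if B_{f,n+j} ≠ 0 (1 ≤ j ≤ m); and ũ_i = 0 whenever B_{fi} is the zero matrix. Suppose B_f is irreducible, ũ ≠ 0, and for every index i with ũ_i > 0 one has ((D_f⁻¹ B_f ũ)_i + (ũᵀ B_{fi} ũ)/(D_f)_{ii}) / ũ_i ≥ 4.5. Then the higher-order SIWS model has an equilibrium z* ∈ D̄ with z* ≥ (2/3)·ũ componentwise; in particular z*_i ≥ 2/3 for every i ≤ n with B_{fi} ≠ 0, and z*_{n+j} ≥ (2/3)·w_{j,max} for every j with B_{f,n+j} ≠ 0. -/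

import Mathlib

open Matrix Filter Topology MeasureTheory

noncomputable section

/-- `Z(z) = diag(z_1,…,z_n,0,…,0)`. -/
def Zmat (n : ℕ) {N : ℕ} (z : Fin N → ℝ) : Matrix (Fin N) (Fin N) ℝ :=
  Matrix.diagonal fun i => if (i : ℕ) < n then z i else 0

/-- `H(z)_i = zᵀ B_{fi} z`. -/
def Hquad {N : ℕ} (Bfi : Fin N → Matrix (Fin N) (Fin N) ℝ) (z : Fin N → ℝ) : Fin N → ℝ :=
  fun i => z ⬝ᵥ (Bfi i).mulVec z

/-- The higher-order SIWS vector field `G(z) = -D_f z + (I - Z(z)) (B_f z + H(z))`. -/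
def Gfield (n : ℕ) {N : ℕ} (Df Bf : Matrix (Fin N) (Fin N) ℝ)
    (Bfi : Fin N → Matrix (Fin N) (Fin N) ℝ) (z : Fin N → ℝ) : Fin N → ℝ :=
  -(Df.mulVec z) + (1 - Zmat n z).mulVec (Bf.mulVec z + Hquad Bfi z)

/-- Upper bound vector: `1` on the first `n` coordinates, `w_{j,max}` on the rest. -/
def ubound (n : ℕ) {N : ℕ} (Df Bf : Matrix (Fin N) (Fin N) ℝ)
    (Bfi : Fin N → Matrix (Fin N) (Fin N) ℝ) (i : Fin N) : ℝ :=
  if (i : ℕ) < n then 1 else (∑ q, Bf i q + ∑ p, ∑ q, Bfi i p q) / Df i i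

/-- The closed domain `D̄`. -/
def Dbar (n : ℕ) {N : ℕ} (Df Bf : Matrix (Fin N) (Fin N) ℝ)
    (Bfi : Fin N → Matrix (Fin N) (Fin N) ℝ) : Set (Fin N → ℝ) :=
  {z | ∀ i, 0 ≤ z i ∧ z i ≤ ubound n Df Bf Bfi i}

/-- The open domain `𝐃`. -/
def Dint (n : ℕ) {N : ℕ} (Df Bf : Matrix (Fin N) (Fin N) ℝ)
    (Bfi : Fin N → Matrix (Fin N) (Fin N) ℝ) : Set (Fin N → ℝ) :=
  {z | ∀ i, 0 < z i ∧ z i < ubound n Df Bf Bfi i}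

/-- A solution of `z' = G(z)` on `[0,∞)`. -/
def IsSolution {N : ℕ} (G : (Fin N → ℝ) → (Fin N → ℝ)) (z : ℝ → Fin N → ℝ) : Prop :=
  ∀ t : ℝ, 0 ≤ t → HasDerivAt z (G (z t)) t

/-- Irreducibility of a (nonnegative) square matrix. -/
def Irred {N : ℕ} (M : Matrix (Fin N) (Fin N) ℝ) : Prop :=
  ∀ i j : Fin N, i ≠ j → ∃ (r : ℕ) (k : ℕ → Fin N),
    k 0 = i ∧ k r = j ∧ ∀ s, s < r → 0 < M (k s) (k (s + 1))

/-- Spectral radius: maximum modulus of the complex eigenvalues. -/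
def specRad {N : ℕ} (M : Matrix (Fin N) (Fin N) ℝ) : ℝ :=
  sSup {r : ℝ | ∃ μ : ℂ, (M.map fun x : ℝ => (x : ℂ)).charpoly.IsRoot μ ∧ r = ‖μ‖}

/-- Spectral abscissa: maximum real part of the complex eigenvalues. -/
def specAbs {N : ℕ} (M : Matrix (Fin N) (Fin N) ℝ) : ℝ :=
  sSup {r : ℝ | ∃ μ : ℂ, (M.map fun x : ℝ => (x : ℂ)).charpoly.IsRoot μ ∧ r = μ.re}

/-- A matrix is Hurwitz if every eigenvalue has negative real part. -/
def IsHurwitz {N : ℕ} (M : Matrix (Fin N) (Fin N) ℝ) : Prop :=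
  ∀ μ : ℂ, (M.map fun x : ℝ => (x : ℂ)).charpoly.IsRoot μ → μ.re < 0

/-- Euclidean norm on `ℝ^N`. -/
def eucNorm {N : ℕ} (v : Fin N → ℝ) : ℝ := Real.sqrt (∑ i, v i ^ 2)

/-- Euclidean norm on a pair of vectors (concatenation). -/
def eucNorm2 {N : ℕ} (v w : Fin N → ℝ) : ℝ := Real.sqrt (∑ i, v i ^ 2 + ∑ i, w i ^ 2)

/-- Jacobian matrix of a vector field at a point. -/
def jacobian {N : ℕ} (G : (Fin N → ℝ) → (Fin N → ℝ)) (z : Fin N → ℝ) :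
    Matrix (Fin N) (Fin N) ℝ :=
  Matrix.of fun i j => fderiv ℝ G z (Pi.single j 1) i

/-- Structural hypotheses of the higher-order SIWS model. -/
structure ModelHyp (n : ℕ) {N : ℕ} (Df Bf : Matrix (Fin N) (Fin N) ℝ)
    (Bfi : Fin N → Matrix (Fin N) (Fin N) ℝ) : Prop where
  dDiag : ∀ i j, i ≠ j → Df i j = 0
  dPos : ∀ i, 0 < Df i i
  bNonneg : ∀ p q, 0 ≤ Bf p q
  bBlock : ∀ p q : Fin N, n ≤ (p : ℕ) → n ≤ (q : ℕ) → Bf p q = 0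
  bfiNonneg : ∀ i p q, 0 ≤ Bfi i p q
  bfiBlock1 : ∀ i : Fin N, (i : ℕ) < n → ∀ p q : Fin N, n ≤ (p : ℕ) → n ≤ (q : ℕ) →
    Bfi i p q = 0
  bfiBlock2 : ∀ i : Fin N, n ≤ (i : ℕ) → ∀ p q : Fin N, ¬((p : ℕ) < n ∧ (q : ℕ) < n) →
    Bfi i p q = 0

/-- Bi-virus vector field for one virus:
`G^ν(z, zo) = -D_f^ν z + (I - Z(z) - Z(zo)) (B_f^ν z + H^ν(z))`. -/
def GBi (n : ℕ) {N : ℕ} (Df Bf : Matrix (Fin N) (Fin N) ℝ)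
    (Bfi : Fin N → Matrix (Fin N) (Fin N) ℝ) (z zo : Fin N → ℝ) : Fin N → ℝ :=
  -(Df.mulVec z) + (1 - Zmat n z - Zmat n zo).mulVec (Bf.mulVec z + Hquad Bfi z)

/-- A solution of the bi-virus dynamics on `[0,∞)`. -/
def IsSolutionBi (n : ℕ) {N : ℕ} (Df1 Bf1 : Matrix (Fin N) (Fin N) ℝ)
    (Bfi1 : Fin N → Matrix (Fin N) (Fin N) ℝ) (Df2 Bf2 : Matrix (Fin N) (Fin N) ℝ)
    (Bfi2 : Fin N → Matrix (Fin N) (Fin N) ℝ) (z1 z2 : ℝ → Fin N → ℝ) : Prop :=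
  ∀ t : ℝ, 0 ≤ t →
    HasDerivAt z1 (GBi n Df1 Bf1 Bfi1 (z1 t) (z2 t)) t ∧
    HasDerivAt z2 (GBi n Df2 Bf2 Bfi2 (z2 t) (z1 t)) t

/-- Membership in the bi-virus domain `D̄_bi`. -/
def InDbarBi (n : ℕ) {N : ℕ} (Df1 Bf1 : Matrix (Fin N) (Fin N) ℝ)
    (Bfi1 : Fin N → Matrix (Fin N) (Fin N) ℝ) (Df2 Bf2 : Matrix (Fin N) (Fin N) ℝ)
    (Bfi2 : Fin N → Matrix (Fin N) (Fin N) ℝ) (z1 z2 : Fin N → ℝ) : Prop :=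
  z1 ∈ Dbar n Df1 Bf1 Bfi1 ∧ z2 ∈ Dbar n Df2 Bf2 Bfi2 ∧
    ∀ i : Fin N, (i : ℕ) < n → z1 i + z2 i ≤ 1

/-- The vector `𝟙` : first `n` coordinates equal `1`, the rest `0`. -/
def onevec (n : ℕ) {N : ℕ} : Fin N → ℝ := fun i => if (i : ℕ) < n then 1 else 0

/-- The general SIWS vector field. -/
def Ggen (n : ℕ) {N : ℕ} (Df : Matrix (Fin N) (Fin N) ℝ)
    (F H : (Fin N → ℝ) → (Fin N → ℝ)) (z : Fin N → ℝ) : Fin N → ℝ := fun i =>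
  if (i : ℕ) < n then -(Df i i * z i) + (1 - z i) * (F z i + H z i)
  else -(Df i i * z i) + (F z i + H z i)

/-- Upper bound vector for the general SIWS model. -/
def uboundGen (n : ℕ) {N : ℕ} (Df : Matrix (Fin N) (Fin N) ℝ)
    (F H : (Fin N → ℝ) → (Fin N → ℝ)) (i : Fin N) : ℝ :=
  if (i : ℕ) < n then 1 else (F (onevec n) i + H (onevec n) i) / Df i i

def DbarGen (n : ℕ) {N : ℕ} (Df : Matrix (Fin N) (Fin N) ℝ)
    (F H : (Fin N → ℝ) → (Fin N → ℝ)) : Set (Fin N → ℝ) :=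
  {z | ∀ i, 0 ≤ z i ∧ z i ≤ uboundGen n Df F H i}

def DintGen (n : ℕ) {N : ℕ} (Df : Matrix (Fin N) (Fin N) ℝ)
    (F H : (Fin N → ℝ) → (Fin N → ℝ)) : Set (Fin N → ℝ) :=
  {z | ∀ i, 0 < z i ∧ z i < uboundGen n Df F H i}

/-- Structural hypotheses of the general SIWS model. -/
structure GenHyp (n : ℕ) {N : ℕ} (Df : Matrix (Fin N) (Fin N) ℝ)
    (F H : (Fin N → ℝ) → (Fin N → ℝ)) : Prop where
  dDiag : ∀ i j, i ≠ j → Df i j = 0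
  dPos : ∀ i, 0 < Df i i
  fSmooth : ContDiff ℝ 1 F
  hSmooth : ContDiff ℝ 1 H
  fZero : F 0 = 0
  hZero : H 0 = 0
  fDep : ∀ i : Fin N, n ≤ (i : ℕ) → ∀ z z' : Fin N → ℝ,
    (∀ j : Fin N, (j : ℕ) < n → z j = z' j) → F z i = F z' i
  hDep : ∀ i : Fin N, n ≤ (i : ℕ) → ∀ z z' : Fin N → ℝ,
    (∀ j : Fin N, (j : ℕ) < n → z j = z' j) → H z i = H z' i
  fMono : ∀ (z : Fin N → ℝ) (i j : Fin N), 0 ≤ fderiv ℝ F z (Pi.single j 1) i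
  hMono : ∀ (z : Fin N → ℝ) (i j : Fin N), 0 ≤ fderiv ℝ H z (Pi.single j 1) i
  hJacZero : fderiv ℝ H 0 = 0
  edgeHyp : ∃ E : Set (Fin N × Fin N),
    (∀ e ∈ E, e.1 ≠ e.2) ∧
    (∀ i j : Fin N, i ≠ j → ∃ (r : ℕ) (k : ℕ → Fin N),
      k 0 = i ∧ k r = j ∧ ∀ s, s < r → (k s, k (s + 1)) ∈ E) ∧
    (∀ (z : Fin N → ℝ), ∀ e ∈ E, 0 < fderiv ℝ F z (Pi.single e.2 1) e.1)

/-- The perturbed SIWS vector field `G_ε(z) = -D_f z + (I - Z(z)) (B_f z + ε H(z))`. -/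
def Gpert (n : ℕ) {N : ℕ} (Df Bf : Matrix (Fin N) (Fin N) ℝ)
    (H : (Fin N → ℝ) → (Fin N → ℝ)) (ε : ℝ) (z : Fin N → ℝ) : Fin N → ℝ :=
  -(Df.mulVec z) + (1 - Zmat n z).mulVec (Bf.mulVec z + ε • H z)

/-!
Solving `G(z)_i = 0` for `z_i` with the pressure `B_f z + H(z)` held fixed turns the equilibria
into the fixed points of a map that is monotone on nonnegative vectors, because `B_f` and every
`B_{fi}` are nonnegative. This map sends the order interval `[(2/3)·ũ, ubound]` into itself:
the upper bound holds since the rows `i > n` only see the coordinates `z_j ≤ 1` with `j ≤ n`,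
and the lower bound is where the threshold `9/2` enters. Knaster–Tarski on this complete
lattice then gives the equilibrium.
-/

theorem exists_isFixedPt_of_mapsTo_Icc {α : Type*} [ConditionallyCompleteLattice α]
    {f : α → α} {a b : α} (hab : a ≤ b) (hmaps : Set.MapsTo f (Set.Icc a b) (Set.Icc a b))
    (hmono : MonotoneOn f (Set.Icc a b)) :
    ∃ x ∈ Set.Icc a b, Function.IsFixedPt f x := by
  have : Fact (a ≤ b) := ⟨hab⟩
  let g : Set.Icc a b →o Set.Icc a b := ⟨hmaps.restrict, fun x y hxy => hmono x.2 y.2 hxy⟩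
  exact ⟨g.lfp, g.lfp.2, congrArg Subtype.val g.map_lfp⟩

namespace Matrix

variable {ι : Type*} [Fintype ι] {M : Matrix ι ι ℝ} {u v : ι → ℝ}

lemma mulVec_nonneg_of_nonneg (hM : ∀ p q, 0 ≤ M p q) (hv : 0 ≤ v) : 0 ≤ M *ᵥ v :=
  fun i => dotProduct_nonneg_of_nonneg (hM i) hv

lemma mulVec_mono_of_nonneg (hM : ∀ p q, 0 ≤ M p q) (huv : u ≤ v) : M *ᵥ u ≤ M *ᵥ v :=
  fun i => dotProduct_le_dotProduct_of_nonneg_left huv (hM i)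

lemma dotProduct_mulVec_self_nonneg_of_nonneg (hM : ∀ p q, 0 ≤ M p q) (hv : 0 ≤ v) :
    0 ≤ v ⬝ᵥ M *ᵥ v :=
  dotProduct_nonneg_of_nonneg hv (mulVec_nonneg_of_nonneg hM hv)

lemma dotProduct_mulVec_self_mono_of_nonneg (hM : ∀ p q, 0 ≤ M p q) (hu : 0 ≤ u)
    (huv : u ≤ v) : u ⬝ᵥ M *ᵥ u ≤ v ⬝ᵥ M *ᵥ v :=
  (dotProduct_le_dotProduct_of_nonneg_left (mulVec_mono_of_nonneg hM huv) hu).trans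
    (dotProduct_le_dotProduct_of_nonneg_right huv
      (mulVec_nonneg_of_nonneg hM (hu.trans huv)))

lemma IsDiag.mulVec_apply [DecidableEq ι] {D : Matrix ι ι ℝ} (hD : D.IsDiag) (v : ι → ℝ)
    (i : ι) : (D *ᵥ v) i = D i i * v i := by
  conv_lhs => rw [← hD.diagonal_diag]
  rw [mulVec_diagonal, diag_apply]

lemma IsDiag.inv_mul_mulVec_apply [DecidableEq ι] {D : Matrix ι ι ℝ} (hD : D.IsDiag)
    (hD0 : ∀ i, D i i ≠ 0) (A : Matrix ι ι ℝ) (v : ι → ℝ) (i : ι) :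
    ((D⁻¹ * A) *ᵥ v) i = (A *ᵥ v) i / D i i := by
  have hinv : D⁻¹ = diagonal fun i => (D i i)⁻¹ := by
    refine inv_eq_left_inv ?_
    calc (diagonal fun i => (D i i)⁻¹) * D
        = (diagonal fun i => (D i i)⁻¹) * diagonal D.diag := by rw [hD.diagonal_diag]
      _ = 1 := by
          rw [diagonal_mul_diagonal, ← diagonal_one]
          exact congrArg diagonal (funext fun i => inv_mul_cancel₀ (hD0 i))
  rw [hinv, ← mulVec_mulVec, mulVec_diagonal, inv_mul_eq_div]

end Matrix

section SIWS

variable {n N : ℕ} {Df Bf : Matrix (Fin N) (Fin N) ℝ}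
  {Bfi : Fin N → Matrix (Fin N) (Fin N) ℝ}

def infectionPressure (Bf : Matrix (Fin N) (Fin N) ℝ)
    (Bfi : Fin N → Matrix (Fin N) (Fin N) ℝ) (z : Fin N → ℝ) : Fin N → ℝ :=
  Bf *ᵥ z + Hquad Bfi z

def equilibriumMap (n : ℕ) (Df Bf : Matrix (Fin N) (Fin N) ℝ)
    (Bfi : Fin N → Matrix (Fin N) (Fin N) ℝ) (z : Fin N → ℝ) : Fin N → ℝ := fun i =>
  if (i : ℕ) < n then infectionPressure Bf Bfi z i / (Df i i + infectionPressure Bf Bfi z i)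
  else infectionPressure Bf Bfi z i / Df i i

lemma infectionPressure_apply (z : Fin N → ℝ) (i : Fin N) :
    infectionPressure Bf Bfi z i = (Bf *ᵥ z) i + z ⬝ᵥ Bfi i *ᵥ z :=
  rfl

lemma ModelHyp.isDiag (hmod : ModelHyp n Df Bf Bfi) : Df.IsDiag :=
  fun i j hij => hmod.dDiag i j hij

lemma Gfield_apply (hD : Df.IsDiag) (z : Fin N → ℝ) (i : Fin N) :
    Gfield n Df Bf Bfi z i = -(Df i i * z i) +
      (1 - if (i : ℕ) < n then z i else 0) * infectionPressure Bf Bfi z i := by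
  rw [Gfield, Pi.add_apply, Pi.neg_apply, hD.mulVec_apply, Zmat, sub_mulVec, one_mulVec,
    Pi.sub_apply, mulVec_diagonal, infectionPressure]
  ring

lemma ubound_of_lt {i : Fin N} (hi : (i : ℕ) < n) : ubound n Df Bf Bfi i = 1 :=
  if_pos hi

lemma ubound_of_le {i : Fin N} (hi : n ≤ (i : ℕ)) :
    ubound n Df Bf Bfi i = (∑ q, Bf i q + ∑ p, ∑ q, Bfi i p q) / Df i i :=
  if_neg (Nat.not_lt.mpr hi)

namespace ModelHyp

variable (hmod : ModelHyp n Df Bf Bfi)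
include hmod

lemma ubound_nonneg : 0 ≤ ubound n Df Bf Bfi := by
  intro i
  rcases lt_or_ge (i : ℕ) n with hi | hi
  · simp [ubound_of_lt hi]
  · rw [ubound_of_le hi]
    exact div_nonneg (add_nonneg (Finset.sum_nonneg fun q _ => hmod.bNonneg i q)
      (Finset.sum_nonneg fun p _ => Finset.sum_nonneg fun q _ => hmod.bfiNonneg i p q))
      (hmod.dPos i).le

lemma infectionPressure_nonneg {z : Fin N → ℝ} (hz : 0 ≤ z) :
    0 ≤ infectionPressure Bf Bfi z := fun i =>
  add_nonneg (mulVec_nonneg_of_nonneg hmod.bNonneg hz i)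
    (dotProduct_mulVec_self_nonneg_of_nonneg (hmod.bfiNonneg i) hz)

lemma infectionPressure_mono {z z' : Fin N → ℝ} (hz : 0 ≤ z) (hzz' : z ≤ z') :
    infectionPressure Bf Bfi z ≤ infectionPressure Bf Bfi z' := fun i =>
  add_le_add (mulVec_mono_of_nonneg hmod.bNonneg hzz' i)
    (dotProduct_mulVec_self_mono_of_nonneg (hmod.bfiNonneg i) hz hzz')

/-- The pressure is linear plus quadratic, so scaling by `c ≤ 1` loses at most `c ^ 2`. -/
lemma sq_mul_infectionPressure_le {c : ℝ} (hc0 : 0 ≤ c) (hc1 : c ≤ 1) {u z : Fin N → ℝ}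
    (hu : 0 ≤ u) (huz : c • u ≤ z) (i : Fin N) :
    c ^ 2 * infectionPressure Bf Bfi u i ≤ infectionPressure Bf Bfi z i := by
  have hcu : 0 ≤ c • u := smul_nonneg hc0 hu
  have hscale : infectionPressure Bf Bfi (c • u) i =
      c * (Bf *ᵥ u) i + c ^ 2 * (u ⬝ᵥ Bfi i *ᵥ u) := by
    simp only [infectionPressure_apply, mulVec_smul, smul_dotProduct, dotProduct_smul,
      Pi.smul_apply, smul_eq_mul]
    ring
  have hlin : c ^ 2 * (Bf *ᵥ u) i ≤ c * (Bf *ᵥ u) i :=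
    mul_le_mul_of_nonneg_right (by nlinarith) (mulVec_nonneg_of_nonneg hmod.bNonneg hu i)
  calc c ^ 2 * infectionPressure Bf Bfi u i
      ≤ infectionPressure Bf Bfi (c • u) i := by
        rw [hscale, infectionPressure_apply]; linarith
    _ ≤ infectionPressure Bf Bfi z i := hmod.infectionPressure_mono hcu huz i

lemma infectionPressure_le_of_le_ubound {z : Fin N → ℝ} (hz : 0 ≤ z)
    (hzb : z ≤ ubound n Df Bf Bfi) {i : Fin N} (hi : n ≤ (i : ℕ)) :
    infectionPressure Bf Bfi z i ≤ ∑ q, Bf i q + ∑ p, ∑ q, Bfi i p q := by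
  have hle_one : ∀ j : Fin N, (j : ℕ) < n → z j ≤ 1 := fun j hj =>
    (hzb j).trans_eq (ubound_of_lt hj)
  have hlin : (Bf *ᵥ z) i ≤ ∑ q, Bf i q := by
    simp only [mulVec, dotProduct]
    refine Finset.sum_le_sum fun q _ => ?_
    rcases lt_or_ge (q : ℕ) n with hq | hq
    · exact mul_le_of_le_one_right (hmod.bNonneg i q) (hle_one q hq)
    · simp [hmod.bBlock i q hi hq]
  have hquad : z ⬝ᵥ Bfi i *ᵥ z ≤ ∑ p, ∑ q, Bfi i p q := by
    simp only [dotProduct, mulVec, Finset.mul_sum]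
    refine Finset.sum_le_sum fun p _ => Finset.sum_le_sum fun q _ => ?_
    by_cases hpq : (p : ℕ) < n ∧ (q : ℕ) < n
    · have hzz : z p * z q ≤ 1 :=
        mul_le_one₀ (hle_one p hpq.1) (hz q) (hle_one q hpq.2)
      nlinarith [hmod.bfiNonneg i p q, mul_nonneg (hz p) (hz q)]
    · simp [hmod.bfiBlock2 i hi p q hpq]
  rw [infectionPressure_apply]
  linarith

lemma equilibriumMap_mono {z z' : Fin N → ℝ} (hz : 0 ≤ z) (hzz' : z ≤ z') :
    equilibriumMap n Df Bf Bfi z ≤ equilibriumMap n Df Bf Bfi z' := by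
  intro i
  have hf : 0 ≤ infectionPressure Bf Bfi z i := hmod.infectionPressure_nonneg hz i
  have hff' := hmod.infectionPressure_mono hz hzz' i
  have hd := hmod.dPos i
  unfold equilibriumMap
  split_ifs
  · rw [div_le_div_iff₀ (by positivity) (by linarith)]
    nlinarith
  · gcongr

lemma equilibriumMap_le_ubound {z : Fin N → ℝ} (hz : 0 ≤ z)
    (hzb : z ≤ ubound n Df Bf Bfi) :
    equilibriumMap n Df Bf Bfi z ≤ ubound n Df Bf Bfi := by
  intro i
  have hf : 0 ≤ infectionPressure Bf Bfi z i := hmod.infectionPressure_nonneg hz i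
  have hd := hmod.dPos i
  unfold equilibriumMap
  split_ifs with hi
  · rw [ubound_of_lt hi, div_le_one (by positivity)]
    linarith
  · rw [ubound_of_le (Nat.le_of_not_lt hi)]
    gcongr
    exact hmod.infectionPressure_le_of_le_ubound hz hzb (Nat.le_of_not_lt hi)

/-- The threshold `9/2` is what makes `(2/3)·ũ` a sub-solution: `(2/3)^2 · 9/2 = 2`, and
`x ↦ x / (d + x)` sends `2 d u` to at least `2 u / 3` when `u ≤ 1`. -/
lemma smul_le_equilibriumMap {u z : Fin N → ℝ} (hu : 0 ≤ u) (hub : u ≤ ubound n Df Bf Bfi)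
    (hθ : ∀ i, 0 < u i → 9 / 2 * (Df i i * u i) ≤ infectionPressure Bf Bfi u i)
    (huz : (2 / 3 : ℝ) • u ≤ z) :
    (2 / 3 : ℝ) • u ≤ equilibriumMap n Df Bf Bfi z := by
  have hz : 0 ≤ z := (smul_nonneg (by norm_num) hu).trans huz
  intro i
  have hd := hmod.dPos i
  have hf : 0 ≤ infectionPressure Bf Bfi z i := hmod.infectionPressure_nonneg hz i
  have hpressure : 2 * (Df i i * u i) ≤ infectionPressure Bf Bfi z i := by
    rcases (show (0 : ℝ) ≤ u i from hu i).eq_or_lt with hui | hui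
    · rw [← hui, mul_zero, mul_zero]
      exact hf
    · have := hmod.sq_mul_infectionPressure_le (by norm_num) (by norm_num) hu huz i
      nlinarith [hθ i hui]
  simp only [Pi.smul_apply, smul_eq_mul, equilibriumMap]
  split_ifs with hi
  · have hu1 : u i ≤ 1 := (hub i).trans_eq (ubound_of_lt hi)
    rw [le_div_iff₀ (by positivity)]
    nlinarith [mul_nonneg hf (sub_nonneg.mpr hu1), hu i]
  · rw [le_div_iff₀ hd]
    nlinarith [hu i]

lemma Gfield_eq_zero_of_isFixedPt {z : Fin N → ℝ} (hz : 0 ≤ z)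
    (hfix : Function.IsFixedPt (equilibriumMap n Df Bf Bfi) z) :
    Gfield n Df Bf Bfi z = 0 := by
  funext i
  have hf : 0 ≤ infectionPressure Bf Bfi z i := hmod.infectionPressure_nonneg hz i
  have hd := hmod.dPos i
  have hzi := congrFun hfix i
  rw [Gfield_apply hmod.isDiag, Pi.zero_apply]
  unfold equilibriumMap at hzi
  split_ifs at hzi ⊢
  · rw [div_eq_iff (by positivity)] at hzi
    linarith
  · rw [div_eq_iff hd.ne'] at hzi
    linarith

theorem exists_equilibrium_two_thirds_smul_le {u : Fin N → ℝ} (hu : 0 ≤ u)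
    (hub : u ≤ ubound n Df Bf Bfi)
    (hθ : ∀ i, 0 < u i → 9 / 2 * (Df i i * u i) ≤ infectionPressure Bf Bfi u i) :
    ∃ z ∈ Dbar n Df Bf Bfi, Gfield n Df Bf Bfi z = 0 ∧ (2 / 3 : ℝ) • u ≤ z := by
  have hlow : 0 ≤ (2 / 3 : ℝ) • u := smul_nonneg (by norm_num) hu
  have hle : (2 / 3 : ℝ) • u ≤ ubound n Df Bf Bfi := fun i => by
    have : (0 : ℝ) ≤ u i := hu i; have := hub i
    simp only [Pi.smul_apply, smul_eq_mul]; linarith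
  obtain ⟨z, ⟨hz_low, hz_up⟩, hfix⟩ := exists_isFixedPt_of_mapsTo_Icc hle
    (fun z hz => ⟨hmod.smul_le_equilibriumMap hu hub hθ hz.1,
      hmod.equilibriumMap_le_ubound (hlow.trans hz.1) hz.2⟩)
    (fun z hz _ _ hzz' => hmod.equilibriumMap_mono (hlow.trans hz.1) hzz')
  have hz : 0 ≤ z := hlow.trans hz_low
  exact ⟨z, fun i => ⟨hz i, hz_up i⟩, hmod.Gfield_eq_zero_of_isFixedPt hz hfix, hz_low⟩

end ModelHyp

end SIWS

theorem stmt4_general (n m : ℕ)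
    (Df Bf : Matrix (Fin (n + m)) (Fin (n + m)) ℝ)
    (Bfi : Fin (n + m) → Matrix (Fin (n + m)) (Fin (n + m)) ℝ)
    (hmod : ModelHyp n Df Bf Bfi)
    (ut : Fin (n + m) → ℝ)
    (hut : ∀ i, (Bfi i = 0 → ut i = 0) ∧ (Bfi i ≠ 0 → ut i = ubound n Df Bf Bfi i))
    (htheta : ∀ i, 0 < ut i →
      4.5 ≤ (((Df⁻¹ * Bf).mulVec ut) i + (ut ⬝ᵥ (Bfi i).mulVec ut) / Df i i) / ut i) :
    ∃ zs ∈ Dbar n Df Bf Bfi, Gfield n Df Bf Bfi zs = 0 ∧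
      (∀ i, 2 / 3 * ut i ≤ zs i) ∧
      (∀ i : Fin (n + m), (i : ℕ) < n → Bfi i ≠ 0 → 2 / 3 ≤ zs i) ∧
      (∀ i : Fin (n + m), n ≤ (i : ℕ) → Bfi i ≠ 0 →
        2 / 3 * ubound n Df Bf Bfi i ≤ zs i) := by
  have hut_cases : ∀ i, ut i = 0 ∨ ut i = ubound n Df Bf Bfi i := fun i =>
    (em (Bfi i = 0)).imp (hut i).1 (hut i).2
  have hu : 0 ≤ ut := fun i => (hut_cases i).elim (·.ge) (· ▸ hmod.ubound_nonneg i)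
  have hub : ut ≤ ubound n Df Bf Bfi := fun i =>
    (hut_cases i).elim (fun h => h ▸ hmod.ubound_nonneg i) (·.le)
  have hθ : ∀ i, 0 < ut i → 9 / 2 * (Df i i * ut i) ≤ infectionPressure Bf Bfi ut i := by
    intro i hi
    have h := htheta i hi
    rw [hmod.isDiag.inv_mul_mulVec_apply fun j => (hmod.dPos j).ne', ← add_div,
      le_div_iff₀ hi, le_div_iff₀ (hmod.dPos i)] at h
    rw [infectionPressure_apply]
    linarith
  obtain ⟨zs, hzs, hG, hlow⟩ := hmod.exists_equilibrium_two_thirds_smul_le hu hub hθ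
  have hlow' : ∀ i, 2 / 3 * ut i ≤ zs i := hlow
  refine ⟨zs, hzs, hG, hlow', fun i hi hne => ?_, fun i _ hne => ?_⟩
  · simpa [(hut i).2 hne, ubound_of_lt hi] using hlow' i
  · simpa [(hut i).2 hne] using hlow' i

/-- existence of an endemic equilibrium with high infection levels. -/
theorem stmt4 (n m : ℕ) (hn : 0 < n)
    (Df Bf : Matrix (Fin (n + m)) (Fin (n + m)) ℝ)
    (Bfi : Fin (n + m) → Matrix (Fin (n + m)) (Fin (n + m)) ℝ)
    (hmod : ModelHyp n Df Bf Bfi) (hirr : Irred Bf)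
    (ut : Fin (n + m) → ℝ)
    (hut : ∀ i, (Bfi i = 0 → ut i = 0) ∧ (Bfi i ≠ 0 → ut i = ubound n Df Bf Bfi i))
    (hutne : ut ≠ 0)
    (htheta : ∀ i, 0 < ut i →
      4.5 ≤ (((Df⁻¹ * Bf).mulVec ut) i + (ut ⬝ᵥ (Bfi i).mulVec ut) / Df i i) / ut i) :
    ∃ zs ∈ Dbar n Df Bf Bfi, Gfield n Df Bf Bfi zs = 0 ∧
      (∀ i, 2 / 3 * ut i ≤ zs i) ∧
      (∀ i : Fin (n + m), (i : ℕ) < n → Bfi i ≠ 0 → 2 / 3 ≤ zs i) ∧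
      (∀ i : Fin (n + m), n ≤ (i : ℕ) → Bfi i ≠ 0 →
        2 / 3 * ubound n Df Bf Bfi i ≤ zs i) :=
  stmt4_general n m Df Bf Bfi hmod ut hut htheta
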